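/- arXiv:1012.3768 — 5 statements merged into one kernel-verified Lean document; each statement's English description precedes it below -/
import Mathlib

section
/- Fix constants 0 < a < ∞ and 0 < δ < ω < 1. Define f : [0,1] → ℝ by f(p) = ap for p ∈ [0, (1-ω)/a) and f(p) = (1-ω) + F(p - (1-ω)/a) for p ∈ [(1-ω)/a, 1], where F(p) = δ∫_0^{ap/δ} e^{-t²} dt. Then f is twice continuously differentiable on [0,1], takes values in [0, 1-ω+δ] ⊂ [0,1), is concave, and satisfies |f''(p)| ≤ a²√2/(δ√e) for all p. -/
open Real Set Topology

/-! With `c = (1 - ω) / a`, `f` is the antiderivative from `0` of the slope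
`s ↦ a · exp (-(a (s - c)⁺ / δ)²)`, which equals `a` up to `c` and is a rescaled Gaussian after it.
Since `x ↦ (x⁺)²` is `C¹`, the slope is `C¹` and `f` is `C²`; the slope is antitone, so `f` is
concave; and `f'' = -(2a²/δ) · u e^{-u²}` with `u ≥ 0`, bounded via `u e^{-u²} ≤ 1/√(2e)`.
The range bound comes from `∫₀^∞ e^{-t²} = √π / 2 ≤ 1`. -/

lemma hasDerivAt_max_zero_sq (x : ℝ) :
    HasDerivAt (fun y : ℝ => max y 0 ^ 2) (2 * max x 0) x := by
  refine hasDerivAt_of_hasDerivAt_of_ne' (f := fun y : ℝ => max y 0 ^ 2)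
    (g := fun y => 2 * max y 0) (x := 0) (fun y hy => ?_) (by fun_prop) (by fun_prop) x
  rcases hy.lt_or_gt with hy | hy
  · have hloc : (fun y : ℝ => max y 0 ^ 2) =ᶠ[𝓝 y] fun _ => 0 := by
      filter_upwards [eventually_lt_nhds hy] with z hz
      simp [hz.le]
    simpa [hy.le] using (hasDerivAt_const y (0 : ℝ)).congr_of_eventuallyEq hloc
  · have hloc : (fun y : ℝ => max y 0 ^ 2) =ᶠ[𝓝 y] fun z => z ^ 2 := by
      filter_upwards [eventually_gt_nhds hy] with z hz
      simp [hz.le]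
    simpa [hy.le, mul_comm] using (hasDerivAt_pow 2 y).congr_of_eventuallyEq hloc

lemma mul_exp_neg_sq_le (u : ℝ) : u * exp (-u ^ 2) ≤ 1 / (√2 * √(exp 1)) := by
  have hsqrt : √(exp 1) = exp (1 / 2) := by rw [← exp_half]
  have hs2 : √2 ^ 2 = 2 := sq_sqrt (by norm_num)
  -- `√2 u ≤ u² + 1/2 ≤ exp (u² - 1/2)`
  have key : √2 * u ≤ exp (u ^ 2 - 1 / 2) := by
    nlinarith [sq_nonneg (u - √2 / 2), add_one_le_exp (u ^ 2 - 1 / 2)]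
  have hsplit : exp (u ^ 2) = exp (u ^ 2 - 1 / 2) * exp (1 / 2) := by
    rw [← exp_add]; ring_nf
  rw [exp_neg, ← div_eq_mul_inv, div_le_div_iff₀ (exp_pos _) (by positivity), hsqrt, hsplit]
  nlinarith [exp_pos (1 / 2 : ℝ)]

lemma integral_exp_neg_sq_le_one {T : ℝ} (hT : 0 ≤ T) :
    ∫ t in (0 : ℝ)..T, exp (-t ^ 2) ≤ 1 := by
  have hint : MeasureTheory.IntegrableOn (fun t : ℝ => exp (-t ^ 2)) (Ioi 0) := by
    simpa using (integrable_exp_neg_mul_sq one_pos).integrableOn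
  have hsqrtπ : √π ≤ 2 := by
    rw [sqrt_le_left (by norm_num)]; linarith [pi_le_four]
  rw [intervalIntegral.integral_of_le hT]
  calc ∫ t in Ioc 0 T, exp (-t ^ 2) ≤ ∫ t in Ioi 0, exp (-t ^ 2) :=
        MeasureTheory.setIntegral_mono_set hint (.of_forall fun t => (exp_pos _).le)
          Ioc_subset_Ioi_self.eventuallyLE
    _ = √π / 2 := by simpa using integral_gaussian_Ioi 1
    _ ≤ 1 := by linarith

noncomputable def smoothRampSlope (a δ c s : ℝ) : ℝ := a * exp (-(a / δ * max (s - c) 0) ^ 2)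

noncomputable def smoothRamp (a δ c p : ℝ) : ℝ := ∫ s in (0 : ℝ)..p, smoothRampSlope a δ c s

section SmoothRamp

variable {a δ c : ℝ}

lemma smoothRampSlope_of_le {s : ℝ} (hs : s ≤ c) : smoothRampSlope a δ c s = a := by
  simp [smoothRampSlope, hs]

lemma smoothRampSlope_of_ge {s : ℝ} (hs : c ≤ s) :
    smoothRampSlope a δ c s = a * exp (-(a / δ * s - a / δ * c) ^ 2) := by
  simp [smoothRampSlope, hs, mul_sub]

lemma hasDerivAt_smoothRampSlope (s : ℝ) :
    HasDerivAt (smoothRampSlope a δ c)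
      (-(2 * (a / δ) ^ 2 * max (s - c) 0) * smoothRampSlope a δ c s) s := by
  have h : HasDerivAt (fun x => a * exp (-((a / δ) ^ 2 * max (x - c) 0 ^ 2)))
      (a * (exp (-((a / δ) ^ 2 * max (s - c) 0 ^ 2)) * -((a / δ) ^ 2 * (2 * max (s - c) 0)))) s :=
    (((hasDerivAt_max_zero_sq (s - c)).comp_sub_const s c).const_mul _).neg.exp.const_mul a
  convert h using 1
  · funext x; rw [smoothRampSlope, mul_pow]
  · rw [smoothRampSlope, mul_pow]; ring

lemma contDiff_smoothRampSlope : ContDiff ℝ 1 (smoothRampSlope a δ c) := by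
  rw [contDiff_one_iff_deriv]
  refine ⟨fun s => (hasDerivAt_smoothRampSlope s).differentiableAt, ?_⟩
  rw [funext fun s => (hasDerivAt_smoothRampSlope (a := a) (δ := δ) (c := c) s).deriv]
  have : Continuous (smoothRampSlope a δ c) := by unfold smoothRampSlope; fun_prop
  fun_prop

lemma antitone_smoothRampSlope (ha : 0 ≤ a) : Antitone (smoothRampSlope a δ c) := by
  intro s t hst
  simp only [smoothRampSlope, mul_pow]
  gcongr

lemma abs_deriv_smoothRampSlope_le (ha : 0 ≤ a) (hδ : 0 < δ) (s : ℝ) :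
    |deriv (smoothRampSlope a δ c) s| ≤ a ^ 2 * √2 / (δ * √(exp 1)) := by
  obtain ⟨u, hu, hderiv⟩ : ∃ u, 0 ≤ u ∧
      deriv (smoothRampSlope a δ c) s = -(2 * a ^ 2 / δ * (u * exp (-u ^ 2))) := by
    refine ⟨a / δ * max (s - c) 0, by positivity, ?_⟩
    rw [(hasDerivAt_smoothRampSlope s).deriv, smoothRampSlope]
    field_simp
  rw [hderiv, abs_neg, abs_of_nonneg (by positivity)]
  calc 2 * a ^ 2 / δ * (u * exp (-u ^ 2)) ≤ 2 * a ^ 2 / δ * (1 / (√2 * √(exp 1))) := by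
        gcongr; exact mul_exp_neg_sq_le u
    _ = a ^ 2 * √2 / (δ * √(exp 1)) := by
        have : √2 ^ 2 = 2 := sq_sqrt (by norm_num)
        field_simp
        linear_combination -a ^ 2 * this

lemma hasDerivAt_smoothRamp (p : ℝ) :
    HasDerivAt (smoothRamp a δ c) (smoothRampSlope a δ c p) p :=
  (contDiff_smoothRampSlope.continuous.integral_hasStrictDerivAt 0 p).hasDerivAt

lemma deriv_smoothRamp : deriv (smoothRamp a δ c) = smoothRampSlope a δ c :=
  funext fun p => (hasDerivAt_smoothRamp p).deriv

lemma differentiable_smoothRamp : Differentiable ℝ (smoothRamp a δ c) :=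
  fun p => (hasDerivAt_smoothRamp p).differentiableAt

lemma contDiff_smoothRamp : ContDiff ℝ 2 (smoothRamp a δ c) := by
  rw [show (2 : WithTop ℕ∞) = 1 + 1 from rfl, contDiff_succ_iff_deriv, deriv_smoothRamp]
  exact ⟨differentiable_smoothRamp, by simp, contDiff_smoothRampSlope⟩

lemma concaveOn_smoothRamp (ha : 0 ≤ a) : ConcaveOn ℝ univ (smoothRamp a δ c) :=
  Antitone.concaveOn_univ_of_deriv differentiable_smoothRamp
    (deriv_smoothRamp (a := a) ▸ antitone_smoothRampSlope ha)

lemma smoothRamp_nonneg (ha : 0 ≤ a) {p : ℝ} (hp : 0 ≤ p) : 0 ≤ smoothRamp a δ c p :=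
  intervalIntegral.integral_nonneg hp fun s _ => by unfold smoothRampSlope; positivity

lemma smoothRamp_of_le (hc : 0 ≤ c) {p : ℝ} (hp : p ≤ c) : smoothRamp a δ c p = a * p := by
  have hslope : EqOn (smoothRampSlope a δ c) (fun _ => a) (uIcc 0 p) := fun s hs =>
    smoothRampSlope_of_le (le_trans hs.2 (max_le hc hp))
  rw [smoothRamp, intervalIntegral.integral_congr hslope]
  simp [mul_comm]

lemma smoothRamp_of_ge (ha : a ≠ 0) (hδ : δ ≠ 0) (hc : 0 ≤ c) {p : ℝ} (hp : c ≤ p) :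
    smoothRamp a δ c p = a * c + δ * ∫ t in (0 : ℝ)..a * (p - c) / δ, exp (-t ^ 2) := by
  have hslope : EqOn (smoothRampSlope a δ c) (fun s => a * exp (-(a / δ * s - a / δ * c) ^ 2))
      (uIcc c p) := fun s hs => smoothRampSlope_of_ge (by simpa [hp] using hs.1)
  have hcont := contDiff_smoothRampSlope (a := a) (δ := δ) (c := c).continuous
  have hinit : ∫ s in (0 : ℝ)..c, smoothRampSlope a δ c s = a * c := smoothRamp_of_le hc le_rfl
  rw [smoothRamp, ← intervalIntegral.integral_add_adjacent_intervals
    (hcont.intervalIntegrable 0 c) (hcont.intervalIntegrable c p), hinit,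
    intervalIntegral.integral_congr hslope, intervalIntegral.integral_const_mul,
    intervalIntegral.integral_comp_mul_sub (fun t => exp (-t ^ 2)) (div_ne_zero ha hδ), sub_self,
    smul_eq_mul, ← mul_assoc, inv_div, mul_div_cancel₀ _ ha, ← mul_sub, div_mul_eq_mul_div]

lemma smoothRamp_le (ha : 0 < a) (hδ : 0 < δ) (hc : 0 ≤ c) (p : ℝ) :
    smoothRamp a δ c p ≤ a * c + δ := by
  rcases le_total p c with hp | hp
  · rw [smoothRamp_of_le hc hp]
    nlinarith
  · rw [smoothRamp_of_ge ha.ne' hδ.ne' hc hp]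
    have hT : 0 ≤ a * (p - c) / δ := div_nonneg (mul_nonneg ha.le (sub_nonneg.2 hp)) hδ.le
    nlinarith [integral_exp_neg_sq_le_one hT]

end SmoothRamp

theorem modified_target_function_properties (a δ ω : ℝ)
    (ha : 0 < a) (hδ : 0 < δ) (hδω : δ < ω) (hω : ω < 1)
    (F f : ℝ → ℝ)
    (hF : ∀ p, F p = δ * ∫ t in (0:ℝ)..(a * p / δ), Real.exp (-t ^ 2))
    (hf : ∀ p, f p = if p < (1 - ω) / a then a * p
        else (1 - ω) + F (p - (1 - ω) / a)) :
    ContDiff ℝ 2 f ∧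
    (∀ p ∈ Set.Icc (0:ℝ) 1, f p ∈ Set.Icc (0:ℝ) (1 - ω + δ)) ∧
    (1 - ω + δ < 1) ∧
    ConcaveOn ℝ (Set.Icc (0:ℝ) 1) f ∧
    (∀ p ∈ Set.Icc (0:ℝ) 1,
      |deriv (deriv f) p| ≤ a ^ 2 * Real.sqrt 2 / (δ * Real.sqrt (Real.exp 1))) := by
  set c := (1 - ω) / a
  have hc : 0 ≤ c := div_nonneg (by linarith) ha.le
  have hac : a * c = 1 - ω := mul_div_cancel₀ _ ha.ne'
  obtain rfl : f = smoothRamp a δ c := by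
    funext p
    rw [hf]
    split_ifs with hp
    · exact (smoothRamp_of_le hc hp.le).symm
    · rw [smoothRamp_of_ge ha.ne' hδ.ne' hc (not_lt.1 hp), hF, hac]
  refine ⟨contDiff_smoothRamp, fun p hp => ⟨smoothRamp_nonneg ha.le hp.1, ?_⟩, by linarith,
    (concaveOn_smoothRamp ha.le).subset (subset_univ _) (convex_Icc 0 1), fun p _ => ?_⟩
  · exact hac ▸ smoothRamp_le ha hδ hc p
  · rw [deriv_smoothRamp]
    exact abs_deriv_smoothRampSlope_le ha.le hδ p
end

section
/- Let f : [0,1] → [0,1] be concave with a(n,k) := f(k/n). Then the inequality a(2n,k)·C(2n,k) ≥ ∑_{i=0}^{k} a(n,i)·C(n,i)·C(n,k-i) holds for all n ≥ 1 and 0 ≤ k ≤ 2n, where C(m,j) denotes the binomial coefficient. -/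
/-!
The weights `C(n,i) C(n,k-i)` form, up to normalisation, the hypergeometric distribution with
parameters `(2n, k, n)`: by Vandermonde they sum to `C(2n,k)`, and the mean of `i / n` under them
is `k / (2n)`. Jensen's inequality for the concave `f` then bounds the weighted average of
`f (i / n)` by `f (k / (2n))`.
-/

open Finset

namespace Nat

theorem sum_range_choose_mul_choose (m n k : ℕ) :
    ∑ i ∈ range (k + 1), m.choose i * n.choose (k - i) = (m + n).choose k := by
  rw [add_choose_eq, Nat.sum_antidiagonal_eq_sum_range_succ_mk]

theorem sum_range_mul_choose_succ_mul_choose (m n k : ℕ) :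
    ∑ i ∈ range (k + 2), i * (m + 1).choose i * n.choose (k + 1 - i)
      = (m + 1) * (m + n).choose k := by
  rw [sum_range_succ', zero_mul, zero_mul, add_zero, ← sum_range_choose_mul_choose, mul_sum]
  refine sum_congr rfl fun i _ => ?_
  rw [Nat.add_sub_add_right, mul_comm (i + 1), ← add_one_mul_choose_eq]
  ring

theorem add_mul_sum_range_mul_choose_mul_choose (m n k : ℕ) :
    (m + n) * ∑ i ∈ range (k + 1), i * m.choose i * n.choose (k - i)
      = m * k * (m + n).choose k := by
  rcases m with _ | m
  · refine (mul_eq_zero_of_right _ (sum_eq_zero fun i _ => ?_)).trans (by simp)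
    rcases i with _ | i <;> simp
  rcases k with _ | k
  · simp
  rw [sum_range_mul_choose_succ_mul_choose, show m + 1 + n = m + n + 1 by ring,
    ← mul_assoc, mul_comm (m + n + 1), mul_assoc, add_one_mul_choose_eq]
  ring

end Nat

theorem ConcaveOn.sum_smul_le_smul_map_centerMass {𝕜 E β ι : Type*} [Field 𝕜] [LinearOrder 𝕜]
    [IsStrictOrderedRing 𝕜] [AddCommGroup E] [AddCommGroup β] [PartialOrder β]
    [IsOrderedAddMonoid β] [Module 𝕜 E] [Module 𝕜 β] [IsStrictOrderedModule 𝕜 β]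
    {s : Set E} {f : E → β} {t : Finset ι} {w : ι → 𝕜} {p : ι → E}
    (hf : ConcaveOn 𝕜 s f) (h₀ : ∀ i ∈ t, 0 ≤ w i) (hmem : ∀ i ∈ t, w i ≠ 0 → p i ∈ s) :
    ∑ i ∈ t, w i • f (p i) ≤ (∑ i ∈ t, w i) • f (t.centerMass w p) := by
  classical
  rcases (sum_nonneg h₀).eq_or_lt with hw | hw
  · rw [← hw, zero_smul]
    rw [eq_comm, sum_eq_zero_iff_of_nonneg h₀] at hw
    exact (sum_eq_zero fun i hi => by rw [hw i hi, zero_smul]).le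
  have hjensen := hf.le_map_centerMass (t := {i ∈ t | w i ≠ 0})
    (fun i hi => h₀ i (mem_filter.1 hi).1) (by rwa [sum_filter_ne_zero])
    (fun i hi => hmem i (mem_filter.1 hi).1 (mem_filter.1 hi).2)
  rw [centerMass_filter_ne_zero, centerMass_filter_ne_zero, centerMass] at hjensen
  calc ∑ i ∈ t, w i • f (p i)
      = (∑ i ∈ t, w i) • (∑ i ∈ t, w i)⁻¹ • ∑ i ∈ t, w i • f (p i) :=
        (smul_inv_smul₀ hw.ne' _).symm
    _ ≤ _ := smul_le_smul_of_nonneg_left hjensen hw.le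

theorem ConcaveOn.sum_map_div_mul_choose_mul_choose_le {f : ℝ → ℝ}
    (hf : ConcaveOn ℝ (Set.Icc 0 1) f) {m : ℕ} (hm : 0 < m) (n k : ℕ) :
    ∑ i ∈ range (k + 1), f (i / m) * m.choose i * n.choose (k - i)
      ≤ f (k / (m + n)) * (m + n).choose k := by
  set w : ℕ → ℝ := fun i => m.choose i * n.choose (k - i)
  have hw_sum : ∑ i ∈ range (k + 1), w i = (m + n).choose k := by
    simp only [w]
    exact_mod_cast Nat.sum_range_choose_mul_choose m n k
  have hmem : ∀ i ∈ range (k + 1), w i ≠ 0 → (i / m : ℝ) ∈ Set.Icc 0 1 := by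
    intro i _ hi
    have him : i ≤ m := by
      by_contra! h
      exact hi (by simp [w, Nat.choose_eq_zero_of_lt h])
    exact ⟨by positivity, div_le_one_of_le₀ (by exact_mod_cast him) (by positivity)⟩
  have hmean : (m + n : ℝ) * ∑ i ∈ range (k + 1), w i • (i / m : ℝ) = k * (m + n).choose k := by
    have hm' : (m : ℝ) ≠ 0 := by positivity
    have hnat : (m + n : ℝ) * ∑ i ∈ range (k + 1), (i : ℝ) * m.choose i * n.choose (k - i)
        = m * k * (m + n).choose k := by
      exact_mod_cast Nat.add_mul_sum_range_mul_choose_mul_choose m n k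
    have hsum : (∑ i ∈ range (k + 1), w i • (i / m : ℝ)) * m
        = ∑ i ∈ range (k + 1), (i : ℝ) * m.choose i * n.choose (k - i) := by
      rw [sum_mul]
      refine sum_congr rfl fun i _ => ?_
      simp only [w, smul_eq_mul]
      field_simp
    rw [← mul_left_inj' hm', mul_assoc, hsum, hnat]
    ring
  have hcenter : ((m + n).choose k : ℝ) • f ((range (k + 1)).centerMass w (fun i => (i / m : ℝ)))
      = f (k / (m + n)) * (m + n).choose k := by
    rcases eq_or_ne ((m + n).choose k : ℝ) 0 with h | h
    · simp [h]
    rw [centerMass, hw_sum, smul_eq_mul, mul_comm]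
    congr 2
    rw [smul_eq_mul, eq_div_iff (by positivity)]
    field_simp
    linear_combination hmean
  calc ∑ i ∈ range (k + 1), f (i / m) * m.choose i * n.choose (k - i)
      = ∑ i ∈ range (k + 1), w i • f (i / m) :=
        sum_congr rfl fun i _ => by simp only [w, smul_eq_mul]; ring
    _ ≤ (∑ i ∈ range (k + 1), w i) • f ((range (k + 1)).centerMass w (fun i => (i / m : ℝ))) :=
      hf.sum_smul_le_smul_map_centerMass (fun i _ => by positivity) hmem
    _ = _ := by rw [hw_sum, hcenter]

theorem lower_coefficient_inequality_general (f : ℝ → ℝ)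
    (hconc : ConcaveOn ℝ (Set.Icc (0:ℝ) 1) f)
    (n k : ℕ) (hn : 1 ≤ n) :
    ∑ i ∈ Finset.range (k + 1),
        f ((i : ℝ) / (n : ℝ)) * ((n.choose i : ℕ) : ℝ) * ((n.choose (k - i) : ℕ) : ℝ)
      ≤ f ((k : ℝ) / (2 * (n : ℝ))) * (((2 * n).choose k : ℕ) : ℝ) := by
  simpa only [two_mul, Nat.cast_add] using hconc.sum_map_div_mul_choose_mul_choose_le hn n k

theorem lower_coefficient_inequality (f : ℝ → ℝ)
    (hconc : ConcaveOn ℝ (Set.Icc (0:ℝ) 1) f)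
    (hmap : ∀ x ∈ Set.Icc (0:ℝ) 1, f x ∈ Set.Icc (0:ℝ) 1)
    (n k : ℕ) (hn : 1 ≤ n) (hk : k ≤ 2 * n) :
    ∑ i ∈ Finset.range (k + 1),
        f ((i : ℝ) / (n : ℝ)) * ((n.choose i : ℕ) : ℝ) * ((n.choose (k - i) : ℕ) : ℝ)
      ≤ f ((k : ℝ) / (2 * (n : ℝ))) * (((2 * n).choose k : ℕ) : ℝ) :=
  lower_coefficient_inequality_general f hconc n k hn
end

section
/- Conditional on T = n, let K be the number of independent simulations of a split chain needed before obtaining a run with δ_1 = ⋯ = δ_{n-1} = 0 (a draw from Q_n). Then K | T = n is geometric with E(K | T = n) = 1/P(τ ≥ n). If P(T = n) = P(τ ≥ n)/E(τ), then E(K) = ∑_n P(T = n)/P(τ ≥ n) = ∞ whenever τ has unbounded support. -/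
/-!
Every term `P(T = n) / P(τ ≥ n)` of the series equals `1 / E(τ)`, which is positive because
`τ ≥ 1`; a series with a constant nonzero term diverges.
-/

open MeasureTheory

theorem hasSum_succ_mul_one_sub_pow_mul {𝕜 : Type*} [NormedField 𝕜] {p : 𝕜}
    (hp : ‖1 - p‖ < 1) : HasSum (fun k : ℕ => ((k : 𝕜) + 1) * (1 - p) ^ k * p) (1 / p) := by
  have hp0 : p ≠ 0 := by rintro rfl; simp at hp
  have h := (hasSum_choose_mul_geometric_of_norm_lt_one 1 hp).mul_right p
  simp only [Nat.choose_one_right, Nat.cast_add, Nat.cast_one, sub_sub_cancel] at h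
  rwa [show 1 / p ^ (1 + 1) * p = 1 / p by field_simp] at h

theorem expected_attempts_infinite {Ω : Type*} [MeasurableSpace Ω]
    (μ : Measure Ω) [IsProbabilityMeasure μ]
    (τ : Ω → ℕ) (hpos : ∀ ω, 1 ≤ τ ω)
    (hint : Integrable (fun ω => (τ ω : ℝ)) μ)
    (hub : ∀ n : ℕ, 0 < μ {ω | n ≤ τ ω})
    (q : ℕ → ℝ) (hq : ∀ n, q n = (μ {ω | n ≤ τ ω}).toReal)
    (pT : ℕ → ℝ) (hpT : ∀ n, pT n = q n / ∫ ω, (τ ω : ℝ) ∂μ) :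
    (∀ n : ℕ, 1 ≤ n →
      ∑' k : ℕ, ((k : ℝ) + 1) * (1 - q n) ^ k * q n = 1 / q n) ∧
    ¬ Summable (fun n : ℕ => pT (n + 1) / q (n + 1)) := by
  have hq_pos (n : ℕ) : 0 < q n := hq n ▸ ENNReal.toReal_pos (hub n).ne' (measure_ne_top μ _)
  have hq_le (n : ℕ) : q n ≤ 1 := hq n ▸ measureReal_le_one
  have hmean_pos : 0 < ∫ ω, (τ ω : ℝ) ∂μ := by
    have h : ∫ _, (1 : ℝ) ∂μ ≤ ∫ ω, (τ ω : ℝ) ∂μ :=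
      integral_mono (integrable_const 1) hint fun ω => Nat.one_le_cast.mpr (hpos ω)
    simp only [integral_const, probReal_univ, smul_eq_mul, mul_one] at h
    linarith
  refine ⟨fun n _ => (hasSum_succ_mul_one_sub_pow_mul ?_).tsum_eq, ?_⟩
  · rw [Real.norm_eq_abs, abs_of_nonneg (sub_nonneg.mpr (hq_le n))]
    linarith [hq_pos n]
  have hconst : (fun n : ℕ => pT (n + 1) / q (n + 1)) = fun _ => (∫ ω, (τ ω : ℝ) ∂μ)⁻¹ := by
    funext n
    rw [hpT, div_div_cancel_left' (hq_pos _).ne']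
  rw [hconst, summable_const_iff]
  exact inv_ne_zero hmean_pos.ne'
end

section
/- Consider the Markov transition defined by: given μ', draw θ ~ InverseGamma((m-1)/2, m(s² + (ȳ - μ')²)/2) and then μ | θ ~ Normal(ȳ, θ/m), where m ≥ 5, s² > 0 and ȳ ∈ ℝ are fixed. Let V(θ, μ) = 1 + (μ - ȳ)². Then E[V(θ, μ) | μ'] = (1 + (μ' - ȳ)²)/(m-3) + (s² + m - 4)/(m-3). Consequently, for any λ ∈ (1/(m-3), 1), with b = (s² + m - 4)/(m-3), d ≥ b/(λ - 1/(m-3)), and C = {(θ,μ) : V(θ,μ) ≤ d}, the drift inequality E[V(θ,μ) | μ'] ≤ λ V(θ', μ') + b·1_{(θ',μ') ∈ C} holds for all (θ', μ'). -/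
open MeasureTheory

/-- Density of the inverse gamma distribution with shape `a` and rate `b`. -/
noncomputable def igDensity (a b x : ℝ) : ℝ :=
  if 0 < x then b ^ a / Real.Gamma a * x ^ (-(a + 1)) * Real.exp (-b / x) else 0

/-- The inverse gamma distribution with shape `a` and rate `b`. -/
noncomputable def igMeasure (a b : ℝ) : Measure ℝ :=
  volume.withDensity fun x => ENNReal.ofReal (igDensity a b x)

/-!
Integrating out `μ | θ ~ N(ȳ, θ/m)` turns `V` into `1 + θ/m`, and the inverse gamma mean
`c / (a - 1)` (from `∫₀^∞ x^(-t-1) e^(-c/x) dx = c^(-t) Γ(t)`) then gives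
`E[V | μ'] = 1 + (s² + (ȳ - μ')²)/(m - 3)`, i.e. `V(μ')/(m - 3) + b`. An affine map with slope
`1/(m - 3) < λ` satisfies the drift inequality: on `{V ≤ d}` trivially, and off it because
`b ≤ d (λ - 1/(m - 3)) < V (λ - 1/(m - 3))`.
-/

open Real Set ProbabilityTheory
open scoped NNReal

lemma integral_one_add_sq_sub_gaussianReal (μ : ℝ) (v : ℝ≥0) :
    ∫ x, 1 + (x - μ) ^ 2 ∂gaussianReal μ v = 1 + (v : ℝ) := by
  have hsq : Integrable (fun x => (x - μ) ^ 2) (gaussianReal μ v) :=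
    ((memLp_id_gaussianReal 2).sub (memLp_const μ)).integrable_sq
  have hvar := variance_fun_id_gaussianReal (μ := μ) (v := v)
  rw [variance_eq_integral measurable_id'.aemeasurable, integral_id_gaussianReal] at hvar
  rw [integral_add (integrable_const 1) hsq, hvar]
  simp

lemma measurable_igDensity (a b : ℝ) : Measurable (igDensity a b) :=
  Measurable.ite measurableSet_Ioi (by fun_prop) measurable_const

lemma igDensity_nonneg {a b : ℝ} (ha : 0 < a) (hb : 0 ≤ b) (x : ℝ) : 0 ≤ igDensity a b x := by
  unfold igDensity; split_ifs with hx
  · have := Gamma_pos_of_pos ha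
    positivity
  · rfl

lemma igDensity_of_nonpos {a b x : ℝ} (hx : x ≤ 0) : igDensity a b x = 0 :=
  if_neg hx.not_gt

lemma integral_igMeasure {a b : ℝ} (ha : 0 < a) (hb : 0 ≤ b) (f : ℝ → ℝ) :
    ∫ x, f x ∂igMeasure a b = ∫ x in Ioi 0, igDensity a b x * f x := by
  rw [igMeasure, integral_withDensity_eq_integral_toReal_smul
    (measurable_igDensity a b).ennreal_ofReal (.of_forall fun _ => ENNReal.ofReal_lt_top)]
  simp only [ENNReal.toReal_ofReal (igDensity_nonneg ha hb _), smul_eq_mul]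
  refine (setIntegral_eq_integral_of_forall_compl_eq_zero fun x hx => ?_).symm
  rw [igDensity_of_nonpos (not_lt.mp hx), zero_mul]

lemma integral_Ioi_rpow_mul_exp_neg_div {c t : ℝ} (hc : 0 < c) (ht : 0 < t) :
    ∫ x in Ioi 0, x ^ (-t - 1) * exp (-c / x) = (1 / c) ^ t * Gamma t := by
  -- substitute `x = y⁻¹` in Euler's integral for `Γ t`
  rw [← integral_rpow_mul_exp_neg_mul_Ioi ht hc,
    ← integral_comp_rpow_Ioi (fun y => y ^ (t - 1) * exp (-(c * y))) (p := -1) (by norm_num)]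
  refine setIntegral_congr_fun measurableSet_Ioi fun x (hx : 0 < x) => ?_
  rw [smul_eq_mul, abs_neg, abs_one, one_mul, rpow_neg_one, inv_rpow hx.le, ← rpow_neg hx.le,
    ← mul_assoc, ← rpow_add hx]
  ring_nf

lemma integrableOn_Ioi_rpow_mul_exp_neg_div {c t : ℝ} (hc : 0 < c) (ht : 0 < t) :
    IntegrableOn (fun x => x ^ (-t - 1) * exp (-c / x)) (Ioi 0) :=
  Integrable.of_integral_ne_zero <| by
    rw [integral_Ioi_rpow_mul_exp_neg_div hc ht]
    have := Gamma_pos_of_pos ht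
    positivity

lemma igDensity_mul_rpow_of_pos {a b k x : ℝ} (hx : 0 < x) :
    igDensity a b x * x ^ k = b ^ a / Gamma a * (x ^ (-(a - k) - 1) * exp (-b / x)) := by
  rw [igDensity, if_pos hx, show -(a - k) - 1 = -(a + 1) + k by ring, rpow_add hx]
  ring

lemma integrableOn_igDensity_mul_rpow {a b k : ℝ} (hb : 0 < b) (hk : k < a) :
    IntegrableOn (fun x => igDensity a b x * x ^ k) (Ioi 0) :=
  IntegrableOn.congr_fun ((integrableOn_Ioi_rpow_mul_exp_neg_div hb (sub_pos.mpr hk)).const_mul _)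
    (fun _ hx => (igDensity_mul_rpow_of_pos hx).symm) measurableSet_Ioi

lemma setIntegral_igDensity_mul_rpow {a b k : ℝ} (hb : 0 < b) (hk : k < a) :
    ∫ x in Ioi 0, igDensity a b x * x ^ k = b ^ k * Gamma (a - k) / Gamma a := by
  rw [setIntegral_congr_fun measurableSet_Ioi fun _ hx => igDensity_mul_rpow_of_pos hx,
    integral_const_mul, integral_Ioi_rpow_mul_exp_neg_div hb (sub_pos.mpr hk), one_div,
    inv_rpow hb.le, ← rpow_neg hb.le]
  have hpow : b ^ a * b ^ (-(a - k)) = b ^ k := by rw [← rpow_add hb]; ring_nf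
  rw [← hpow]
  ring

lemma integral_one_add_toNNReal_div_igMeasure {a b m : ℝ} (ha : 1 < a) (hb : 0 < b)
    (hm : 0 ≤ m) : ∫ x, 1 + ((x / m).toNNReal : ℝ) ∂igMeasure a b = 1 + b / (m * (a - 1)) := by
  have hΓ : Gamma a = (a - 1) * Gamma (a - 1) := by
    rw [← Gamma_add_one (sub_ne_zero.mpr ha.ne'), sub_add_cancel]
  have hΓpos := Gamma_pos_of_pos (sub_pos.mpr ha)
  calc ∫ x, 1 + ((x / m).toNNReal : ℝ) ∂igMeasure a b
      = ∫ x in Ioi 0, igDensity a b x * x ^ (0 : ℝ) + m⁻¹ * (igDensity a b x * x ^ (1 : ℝ)) := by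
        rw [integral_igMeasure (by linarith) hb.le]
        refine setIntegral_congr_fun measurableSet_Ioi fun x (hx : 0 < x) => ?_
        rw [rpow_zero, rpow_one, Real.coe_toNNReal _ (div_nonneg hx.le hm)]
        ring
    _ = b ^ (0 : ℝ) * Gamma (a - 0) / Gamma a + m⁻¹ * (b ^ (1 : ℝ) * Gamma (a - 1) / Gamma a) := by
        rw [integral_add (integrableOn_igDensity_mul_rpow hb (by linarith))
          ((integrableOn_igDensity_mul_rpow hb (by linarith)).const_mul _), integral_const_mul,
          setIntegral_igDensity_mul_rpow hb (by linarith),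
          setIntegral_igDensity_mul_rpow hb (by linarith)]
    _ = 1 + b / (m * (a - 1)) := by
        rw [rpow_zero, rpow_one, sub_zero, hΓ]
        have : a - 1 ≠ 0 := sub_ne_zero.mpr ha.ne'
        field_simp

lemma mul_add_le_mul_add_ite {ρ lam b d t : ℝ} (ht : 0 ≤ t) (hρ : ρ < lam)
    (hd : b / (lam - ρ) ≤ d) : ρ * t + b ≤ lam * t + if t ≤ d then b else 0 := by
  split_ifs with htd
  · nlinarith
  · have : b ≤ d * (lam - ρ) := (div_le_iff₀ (sub_pos.mpr hρ)).mp hd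
    nlinarith

theorem gibbs_toy_drift (m s2 ybar : ℝ) (hm : 5 ≤ m) (hs2 : 0 < s2)
    (V : ℝ → ℝ → ℝ) (hV : ∀ θ x, V θ x = 1 + (x - ybar) ^ 2)
    (Ecur : ℝ → ℝ)
    (hE : ∀ μ', Ecur μ' =
      ∫ θ, (∫ x, V θ x ∂(ProbabilityTheory.gaussianReal ybar (Real.toNNReal (θ / m))))
        ∂(igMeasure ((m - 1) / 2) (m * (s2 + (ybar - μ') ^ 2) / 2))) :
    (∀ μ', Ecur μ' = (1 + (μ' - ybar) ^ 2) / (m - 3) + (s2 + m - 4) / (m - 3)) ∧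
    (∀ lam : ℝ, 1 / (m - 3) < lam → lam < 1 →
      ∀ b : ℝ, b = (s2 + m - 4) / (m - 3) →
      ∀ d : ℝ, b / (lam - 1 / (m - 3)) ≤ d →
      ∀ θ' μ' : ℝ,
        Ecur μ' ≤ lam * V θ' μ' + (if V θ' μ' ≤ d then b else 0)) := by
  have hm3 : m - 3 ≠ 0 := by linarith
  have hEcur (μ' : ℝ) : Ecur μ' = (1 + (μ' - ybar) ^ 2) / (m - 3) + (s2 + m - 4) / (m - 3) := by
    simp only [hE, hV, integral_one_add_sq_sub_gaussianReal]
    rw [integral_one_add_toNNReal_div_igMeasure (by linarith) (by positivity) (by linarith),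
      show (m - 1) / 2 - 1 = (m - 3) / 2 by ring]
    field_simp
    ring
  refine ⟨hEcur, fun lam hlam _ b hb d hd θ' μ' => ?_⟩
  rw [hEcur, hV, ← hb, ← one_div_mul_eq_div (m - 3) (1 + _)]
  exact mul_add_le_mul_add_ite (by positivity) hlam hd
end

section
/- Two inverse gamma densities with common shape parameter a > 0 and distinct rate parameters b₁ > b₂ > 0, i.e. g_i(x) = b_i^a/Γ(a) · x^{-a-1} e^{-b_i/x} for x > 0, intersect at exactly one point x* = (b₁ - b₂)/(a·(log b₁ - log b₂)); moreover g₁(x) ≥ g₂(x) for x ≥ x* and g₁(x) ≤ g₂(x) for x ≤ x*. -/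
/-!
On `x > 0` both densities share the positive factor `x ^ (-a - 1) / Γ(a)`, and
`b ^ a * exp (-b / x) = exp (a * log b - b / x)`. Hence `g₂ x ≤ g₁ x` iff
`(b₁ - b₂) / x ≤ a * (log b₁ - log b₂)`, and since `b₁ - b₂` and `log b₁ - log b₂` are positive
this says exactly `x* ≤ x`; symmetrically `g₁ x ≤ g₂ x` iff `x ≤ x*`.
-/

open Real

lemma rpow_div_Gamma_mul_exp_eq {a b x : ℝ} (hb : 0 < b) :
    b ^ a / Gamma a * x ^ (-a - 1) * exp (-b / x) =
      x ^ (-a - 1) / Gamma a * exp (a * log b - b / x) := by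
  rw [rpow_def_of_pos hb, mul_comm (log b), exp_sub, neg_div, exp_neg]
  ring

lemma inverseGamma_density_le_iff {a b₁ b₂ x : ℝ} (ha : 0 < a) (hb₁ : 0 < b₁) (hb₂ : 0 < b₂)
    (hx : 0 < x) :
    b₂ ^ a / Gamma a * x ^ (-a - 1) * exp (-b₂ / x) ≤
        b₁ ^ a / Gamma a * x ^ (-a - 1) * exp (-b₁ / x) ↔
      (b₁ - b₂) / x ≤ a * (log b₁ - log b₂) := by
  have hfactor : 0 < x ^ (-a - 1) / Gamma a := div_pos (rpow_pos_of_pos hx _) (Gamma_pos_of_pos ha)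
  rw [rpow_div_Gamma_mul_exp_eq hb₁, rpow_div_Gamma_mul_exp_eq hb₂,
    mul_le_mul_iff_right₀ hfactor, exp_le_exp, sub_div]
  constructor <;> intro h <;> linarith

theorem inverse_gamma_densities_cross (a b₁ b₂ : ℝ)
    (ha : 0 < a) (hb2 : 0 < b₂) (hb : b₂ < b₁)
    (g₁ g₂ : ℝ → ℝ)
    (hg₁ : ∀ x, 0 < x → g₁ x = b₁ ^ a / Real.Gamma a * x ^ (-a - 1) * Real.exp (-b₁ / x))
    (hg₂ : ∀ x, 0 < x → g₂ x = b₂ ^ a / Real.Gamma a * x ^ (-a - 1) * Real.exp (-b₂ / x))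
    (xstar : ℝ) (hx : xstar = (b₁ - b₂) / (a * (Real.log b₁ - Real.log b₂))) :
    (∀ x : ℝ, 0 < x → (g₁ x = g₂ x ↔ x = xstar)) ∧
    (∀ x : ℝ, xstar ≤ x → g₂ x ≤ g₁ x) ∧
    (∀ x : ℝ, 0 < x → x ≤ xstar → g₁ x ≤ g₂ x) := by
  have hb1 : 0 < b₁ := hb2.trans hb
  have hlog : 0 < a * (log b₁ - log b₂) := mul_pos ha (sub_pos.2 (log_lt_log hb2 hb))
  have hxstar : 0 < xstar := hx ▸ div_pos (sub_pos.2 hb) hlog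
  have above : ∀ x, 0 < x → (g₂ x ≤ g₁ x ↔ xstar ≤ x) := fun x hx0 => by
    rw [hg₁ x hx0, hg₂ x hx0, inverseGamma_density_le_iff ha hb1 hb2 hx0, hx,
      div_le_comm₀ hx0 hlog]
  have below : ∀ x, 0 < x → (g₁ x ≤ g₂ x ↔ x ≤ xstar) := fun x hx0 => by
    rw [hg₁ x hx0, hg₂ x hx0, inverseGamma_density_le_iff ha hb2 hb1 hx0, hx,
      le_div_comm₀ hx0 hlog, ← neg_sub b₁, ← neg_sub (log b₁), neg_div, mul_neg, neg_le_neg_iff]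
  refine ⟨fun x hx0 => ?_, fun x hle => (above x (hxstar.trans_le hle)).2 hle,
    fun x hx0 => (below x hx0).2⟩
  rw [le_antisymm_iff, below x hx0, above x hx0, ← le_antisymm_iff]
end
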